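/- In the quantum Bruhat graph, if w → ws_β is a quantum edge (i.e. ℓ(ws_β) = ℓ(w) + 1 - 2⟨ρ, β∨⟩), then β is a quantum root; moreover, for any reduced expression s_β = s_{j_1}s_{j_2}⋯s_{j_r} one has ℓ(w s_{j_1}⋯s_{j_t}) = ℓ(w) - t for all 0 ≤ t ≤ r. -/
import Mathlib


/-- An axiomatized finite crystallographic root system datum, with weight/root
space `V` over `ℚ`, simple roots `α i`, an invariant inner product `B`,
Weyl group `W` acting faithfully on `V`, and the set of roots `isRoot`. -/
structure RootSystemData (I : Type) [Fintype I] [DecidableEq I] where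
  V : Type
  [instAddCommGroup : AddCommGroup V]
  [instModule : Module ℚ V]
  W : Type
  [instGroup : Group W]
  α : I → V
  B : V →ₗ[ℚ] V →ₗ[ℚ] ℚ
  toLin : W →* Module.End ℚ V
  s : I → W
  isRoot : V → Prop
  B_symm : ∀ x y, B x y = B y x
  B_pos : ∀ β, isRoot β → 0 < B β β
  B_inv : ∀ (w : W) (x y : V), B (toLin w x) (toLin w y) = B x y
  root_simple : ∀ i, isRoot (α i)
  root_inv : ∀ (w : W) (β : V), isRoot β → isRoot (toLin w β)
  root_gen : ∀ β, isRoot β → ∃ (w : W) (i : I), β = toLin w (α i)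
  root_finite : (setOf isRoot).Finite
  indep : LinearIndependent ℚ α
  s_act : ∀ i x, toLin (s i) x = x - (2 * B (α i) x / B (α i) (α i)) • α i
  gen : Subgroup.closure (Set.range s) = ⊤
  faithful : Function.Injective toLin
  root_int : ∀ β, isRoot β → ∃ c : I → ℤ, β = ∑ i, (c i : ℚ) • α i
  pos_or_neg : ∀ β, isRoot β →
    (∃ c : I → ℕ, β = ∑ i, (c i : ℚ) • α i) ∨ (∃ c : I → ℕ, -β = ∑ i, (c i : ℚ) • α i)

attribute [instance] RootSystemData.instAddCommGroup RootSystemData.instModule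
  RootSystemData.instGroup

namespace RootSystemData

variable {I : Type} [Fintype I] [DecidableEq I] (R : RootSystemData I)

/-- `β` is a positive root. -/
def IsPos (β : R.V) : Prop :=
  R.isRoot β ∧ ∃ c : I → ℕ, β = ∑ i, (c i : ℚ) • R.α i

/-- The finite set of positive roots. -/
noncomputable def posFinset : Finset R.V :=
  (Set.Finite.subset R.root_finite (fun _ hb => hb.1) : (setOf R.IsPos).Finite).toFinset

/-- Half the sum of the positive roots. -/
noncomputable def ρ : R.V := (2 : ℚ)⁻¹ • ∑ β ∈ R.posFinset, β

/-- The pairing `⟨x, β∨⟩` of `x` with the coroot of `β`. -/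
noncomputable def coroot (β x : R.V) : ℚ := 2 * R.B β x / R.B β β

open Classical in
/-- The reflection `s_β ∈ W` in a root `β`. -/
noncomputable def refl (β : R.V) : R.W :=
  if h : R.isRoot β then
    (R.root_gen β h).choose * R.s (R.root_gen β h).choose_spec.choose *
      (R.root_gen β h).choose⁻¹
  else 1

/-- The length function on the Weyl group. -/
noncomputable def len (w : R.W) : ℕ :=
  sInf {n | ∃ l : List I, l.length = n ∧ (l.map R.s).prod = w}

/-- Bruhat order: generated by multiplication by reflections which increases length. -/
def bruhatLE : R.W → R.W → Prop :=
  Relation.ReflTransGen (fun u v => (∃ β, R.IsPos β ∧ v = R.refl β * u) ∧ R.len u < R.len v)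

def bruhatLT (u v : R.W) : Prop := R.bruhatLE u v ∧ u ≠ v

/-- The parabolic subgroup `W_J`. -/
def WJ (J : Set I) : Subgroup R.W := Subgroup.closure (R.s '' J)

/-- `w` is a minimal-length representative of its coset `w W_J`. -/
def IsMinRep (J : Set I) (w : R.W) : Prop :=
  ∀ z ∈ R.WJ J, R.len w ≤ R.len (w * z)

/-- `β ∈ Δ⁺_J`: positive roots in the span of the simple roots indexed by `J`. -/
def posJ (J : Set I) (β : R.V) : Prop :=
  R.IsPos β ∧ β ∈ Submodule.span ℚ (R.α '' J)

/-- A Bruhat edge `x → x s_β` in the quantum Bruhat graph. -/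
def BruhatEdge (x : R.W) (β : R.V) : Prop :=
  R.IsPos β ∧ R.len (x * R.refl β) = R.len x + 1

/-- A quantum edge `x → x s_β` in the quantum Bruhat graph. -/
def QuantumEdge (x : R.W) (β : R.V) : Prop :=
  R.IsPos β ∧ (R.len (x * R.refl β) : ℚ) = R.len x + 1 - 2 * R.coroot β R.ρ

/-- An edge of the quantum Bruhat graph. -/
def QBGEdge (x : R.W) (β : R.V) : Prop := R.BruhatEdge x β ∨ R.QuantumEdge x β

/-- A quantum root: `ℓ(s_β) = 2⟨ρ, β∨⟩ - 1`. -/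
def IsQuantumRoot (β : R.V) : Prop :=
  R.IsPos β ∧ (R.len (R.refl β) : ℚ) = 2 * R.coroot β R.ρ - 1

/-- A long root (maximal squared length); in simply-laced type all roots are long. -/
def IsLong (β : R.V) : Prop :=
  R.isRoot β ∧ ∀ γ, R.isRoot γ → R.B γ γ ≤ R.B β β

/-- A short root. -/
def IsShort (β : R.V) : Prop := R.isRoot β ∧ ¬ R.IsLong β

def IsSimplyLaced : Prop :=
  ∀ β γ, R.isRoot β → R.isRoot γ → R.B β β = R.B γ γ

def IsIrreducible : Prop :=
  Nonempty I ∧ ∀ J : Set I,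
    (∀ i ∈ J, ∀ j ∉ J, R.B (R.α i) (R.α j) = 0) → J = ∅ ∨ J = Set.univ

/-- `θ` is the highest root. -/
def IsHighestRoot (θ : R.V) : Prop :=
  R.IsPos θ ∧ ∀ β, R.IsPos β → ∃ c : I → ℕ, θ - β = ∑ i, (c i : ℚ) • R.α i

/-- `ϖ` is the fundamental weight associated to `k`. -/
def IsFundamental (k : I) (ϖ : R.V) : Prop :=
  ∀ i, R.coroot (R.α i) ϖ = if i = k then 1 else 0

/-- `ϖ` is minuscule. -/
def IsMinuscule (ϖ : R.V) : Prop :=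
  ∀ β, R.isRoot β → R.coroot β ϖ ∈ ({-1, 0, 1} : Set ℚ)

/-- A strict total order on `Δ⁺` which is a reflection (convex) order. -/
def IsReflectionOrder (lt : R.V → R.V → Prop) : Prop :=
  (∀ β, ¬ lt β β) ∧ (∀ a b c, lt a b → lt b c → lt a c) ∧
  (∀ β γ, R.IsPos β → R.IsPos γ → β ≠ γ → lt β γ ∨ lt γ β) ∧
  (∀ β γ, R.IsPos β → R.IsPos γ → R.IsPos (β + γ) →
    (lt β (β + γ) ∧ lt (β + γ) γ) ∨ (lt γ (β + γ) ∧ lt (β + γ) β))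

end RootSystemData

open RootSystemData in
/-- A directed path in the quantum Bruhat graph with the given list of labels. -/
def QBGPath {I : Type} [Fintype I] [DecidableEq I] (R : RootSystemData I) :
    R.W → List R.V → R.W → Prop
  | x, [], y => x = y
  | x, β :: l, y => R.QBGEdge x β ∧ QBGPath R (x * R.refl β) l y

open RootSystemData in
/-- A directed path in the Bruhat graph (Bruhat edges only). -/
def BGPath {I : Type} [Fintype I] [DecidableEq I] (R : RootSystemData I) :
    R.W → List R.V → R.W → Prop
  | x, [], y => x = y
  | x, β :: l, y => R.BruhatEdge x β ∧ BGPath R (x * R.refl β) l y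

/-- The Cartan pairing `⟨α_j, α_i∨⟩` of type `B_n` (Bourbaki labelling, shifted
to be 0-based: the short simple root is the last one, index `n-1`). -/
def BCartan (n : ℕ) (i j : Fin n) : ℚ :=
  if i = j then 2
  else if (i : ℕ) = n - 1 ∧ (j : ℕ) + 1 = n - 1 then -2
  else if ((i : ℕ) + 1 = j ∨ (j : ℕ) + 1 = i) then -1
  else 0

/-- `R` is of type `B_n` (via the identification `e` of its index set with `Fin n`). -/
def IsTypeB {I : Type} [Fintype I] [DecidableEq I] (R : RootSystemData I)
    (n : ℕ) (e : I ≃ Fin n) : Prop :=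
  2 ≤ n ∧ ∀ i j, R.coroot (R.α i) (R.α j) = BCartan n (e i) (e j)

/-- The product `s_{a+1} s_{a+2} ⋯ s_{b+1}` (0-based: indices `a, a+1, …, b`). -/
noncomputable def sSeq {n : ℕ} (hn : 0 < n) (R : RootSystemData (Fin n)) (a b : ℕ) : R.W :=
  ((List.range (b + 1 - a)).map (fun t => R.s ⟨(a + t) % n, Nat.mod_lt _ hn⟩)).prod

/-- The sum `α_{a+1} + ⋯ + α_b` of simple roots (0-based half-open interval `[a, b)`). -/
def aSum {n : ℕ} (hn : 0 < n) (R : RootSystemData (Fin n)) (a b : ℕ) : R.V :=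
  ∑ t ∈ Finset.Ico a b, R.α ⟨t % n, Nat.mod_lt _ hn⟩

namespace RootSystemData

variable {I : Type} [Fintype I] [DecidableEq I] (R : RootSystemData I)

lemma B_simple_ne (i : I) : R.B (R.α i) (R.α i) ≠ 0 :=
  ne_of_gt (R.B_pos _ (R.root_simple i))

lemma root_ne_zero {β : R.V} (h : R.isRoot β) : β ≠ 0 := by
  intro e
  have := R.B_pos β h
  rw [e] at this
  simp at this

lemma coroot_sub (β x y : R.V) : R.coroot β (x - y) = R.coroot β x - R.coroot β y := by
  unfold coroot
  rw [map_sub]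
  ring

lemma coroot_smul (β : R.V) (c : ℚ) (x : R.V) :
    R.coroot β (c • x) = c * R.coroot β x := by
  unfold coroot
  rw [map_smul, smul_eq_mul]
  ring

lemma coroot_sum (β : R.V) {κ : Type*} (s : Finset κ) (f : κ → R.V) :
    R.coroot β (∑ j ∈ s, f j) = ∑ j ∈ s, R.coroot β (f j) := by
  unfold coroot
  rw [map_sum, Finset.mul_sum, Finset.sum_div]

lemma coroot_self {β : R.V} (h : R.isRoot β) : R.coroot β β = 2 := by
  unfold coroot
  field_simp [ne_of_gt (R.B_pos β h)]

lemma coroot_inv (w : R.W) (β x : R.V) :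
    R.coroot (R.toLin w β) (R.toLin w x) = R.coroot β x := by
  unfold coroot
  rw [R.B_inv, R.B_inv]

lemma s_act' (i : I) (x : R.V) :
    R.toLin (R.s i) x = x - R.coroot (R.α i) x • R.α i := R.s_act i x

lemma toLin_mul_apply (u v : R.W) (x : R.V) :
    R.toLin (u * v) x = R.toLin u (R.toLin v x) := by
  rw [map_mul]
  rfl

lemma toLin_inv_apply (w : R.W) (x : R.V) :
    R.toLin w (R.toLin w⁻¹ x) = x := by
  rw [← R.toLin_mul_apply, mul_inv_cancel, map_one]
  rfl

lemma toLin_s_s (i : I) (x : R.V) :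
    R.toLin (R.s i) (R.toLin (R.s i) x) = x := by
  rw [R.s_act', R.s_act', coroot_sub, coroot_smul, R.coroot_self (R.root_simple i)]
  module

lemma s_sq (i : I) : R.s i * R.s i = 1 := by
  apply R.faithful
  rw [map_mul, map_one]
  exact LinearMap.ext fun x => R.toLin_s_s i x

lemma s_inv (i : I) : (R.s i)⁻¹ = R.s i :=
  inv_eq_of_mul_eq_one_left (R.s_sq i)

/-! ### Length -/

lemma word_prod_inv (l : List I) :
    ((l.reverse).map R.s).prod = ((l.map R.s).prod)⁻¹ := by
  induction l with
  | nil => simp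
  | cons a l ih =>
      simp only [List.reverse_cons, List.map_append, List.map_cons, List.prod_append,
        List.prod_cons, List.map_nil, List.prod_nil, mul_one, mul_inv_rev, ih, R.s_inv]

lemma exists_word (w : R.W) : ∃ l : List I, (l.map R.s).prod = w := by
  have hw : w ∈ Subgroup.closure (Set.range R.s) := by
    rw [R.gen]; exact Subgroup.mem_top w
  induction hw using Subgroup.closure_induction with
  | mem x hx =>
      obtain ⟨i, rfl⟩ := hx
      exact ⟨[i], by simp⟩
  | one => exact ⟨[], by simp⟩
  | mul x y _ _ hx hy =>
      obtain ⟨lx, hlx⟩ := hx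
      obtain ⟨ly, hly⟩ := hy
      exact ⟨lx ++ ly, by rw [List.map_append, List.prod_append, hlx, hly]⟩
  | inv x _ hx =>
      obtain ⟨lx, hlx⟩ := hx
      exact ⟨lx.reverse, by rw [R.word_prod_inv, hlx]⟩

lemma len_le {w : R.W} {n : ℕ} (l : List I) (h1 : l.length = n)
    (h2 : (l.map R.s).prod = w) : R.len w ≤ n :=
  Nat.sInf_le ⟨l, h1, h2⟩

lemma len_spec (w : R.W) :
    ∃ l : List I, l.length = R.len w ∧ (l.map R.s).prod = w := by
  obtain ⟨l, hl⟩ := R.exists_word w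
  have : R.len w ∈ {n | ∃ l : List I, l.length = n ∧ (l.map R.s).prod = w} :=
    Nat.sInf_mem ⟨l.length, l, rfl, hl⟩
  exact this

lemma len_word_le (l : List I) : R.len ((l.map R.s).prod) ≤ l.length :=
  R.len_le l rfl rfl

lemma len_mul_le (x y : R.W) : R.len (x * y) ≤ R.len x + R.len y := by
  obtain ⟨lx, hx1, hx2⟩ := R.len_spec x
  obtain ⟨ly, hy1, hy2⟩ := R.len_spec y
  refine R.len_le (lx ++ ly) (by simp [hx1, hy1]) ?_
  rw [List.map_append, List.prod_append, hx2, hy2]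

lemma len_inv (x : R.W) : R.len x⁻¹ = R.len x := by
  have key : ∀ z : R.W, R.len z⁻¹ ≤ R.len z := by
    intro z
    obtain ⟨l, h1, h2⟩ := R.len_spec z
    refine R.len_le l.reverse (by simp [h1]) ?_
    rw [R.word_prod_inv, h2]
  refine le_antisymm (key x) ?_
  have := key x⁻¹
  rwa [inv_inv] at this

lemma len_s_le (i : I) : R.len (R.s i) ≤ 1 :=
  R.len_le [i] rfl (by simp)

/-! ### Reflections -/

lemma toLin_refl {β : R.V} (h : R.isRoot β) (x : R.V) :
    R.toLin (R.refl β) x = x - R.coroot β x • β := by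
  rw [refl, dif_pos h]
  set w := (R.root_gen β h).choose with hw
  set k := (R.root_gen β h).choose_spec.choose with hk
  have hβ : β = R.toLin w (R.α k) := (R.root_gen β h).choose_spec.choose_spec
  rw [R.toLin_mul_apply, R.toLin_mul_apply, R.s_act', map_sub, map_smul,
    R.toLin_inv_apply]
  congr 2
  · rw [← R.coroot_inv w, ← hβ, R.toLin_inv_apply]
  · exact hβ.symm

lemma refl_eq {β : R.V} (h : R.isRoot β) {g : R.W}
    (hg : ∀ x, R.toLin g x = x - R.coroot β x • β) : g = R.refl β := by
  apply R.faithful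
  exact LinearMap.ext fun x => (hg x).trans (R.toLin_refl h x).symm

lemma refl_simple (i : I) : R.refl (R.α i) = R.s i :=
  (R.refl_eq (R.root_simple i) fun x => R.s_act' i x).symm

lemma refl_conj {β : R.V} (h : R.isRoot β) (w : R.W) :
    R.refl (R.toLin w β) = w * R.refl β * w⁻¹ := by
  refine (R.refl_eq (R.root_inv w β h) fun x => ?_).symm
  rw [R.toLin_mul_apply, R.toLin_mul_apply, R.toLin_refl h, map_sub, map_smul,
    R.toLin_inv_apply]
  congr 2
  rw [← R.coroot_inv w, R.toLin_inv_apply]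

/-! ### Coefficients and integrality -/

lemma coeff_unique {c d : I → ℚ}
    (h : ∑ i, c i • R.α i = ∑ i, d i • R.α i) : c = d := by
  have h0 : ∑ i, (c i - d i) • R.α i = 0 := by
    simp only [sub_smul, Finset.sum_sub_distrib, h, sub_self]
  have h1 := Fintype.linearIndependent_iff.mp R.indep (fun i => c i - d i) h0
  funext i
  exact sub_eq_zero.mp (by simpa using h1 i)

lemma coeff_int {β : R.V} (h : R.isRoot β) (c : I → ℚ)
    (hc : β = ∑ i, c i • R.α i) : ∀ i, ∃ m : ℤ, c i = m := by
  obtain ⟨d, hd⟩ := R.root_int β h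
  intro i
  refine ⟨d i, ?_⟩
  have : c = fun i => ((d i : ℚ)) := R.coeff_unique (by rw [← hc, hd])
  rw [this]

lemma pair_int {β γ : R.V} (hβ : R.isRoot β) (hγ : R.isRoot γ) :
    ∃ m : ℤ, R.coroot β γ = m := by
  obtain ⟨w, k, hw⟩ := R.root_gen β hβ
  have h1 : R.coroot β γ = R.coroot (R.α k) (R.toLin w⁻¹ γ) := by
    conv_lhs => rw [hw, ← R.toLin_inv_apply w γ]
    rw [R.coroot_inv]
  have hγ' : R.isRoot (R.toLin w⁻¹ γ) := R.root_inv w⁻¹ γ hγ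
  obtain ⟨d, hd⟩ := R.root_int _ hγ'
  -- Cartan integrality: coroot (α k) (α j) ∈ ℤ
  have cartan : ∀ j, ∃ m : ℤ, R.coroot (R.α k) (R.α j) = m := by
    intro j
    have hroot : R.isRoot (R.toLin (R.s k) (R.α j)) :=
      R.root_inv (R.s k) (R.α j) (R.root_simple j)
    have hact : R.toLin (R.s k) (R.α j) =
        ∑ t, ((if t = j then (1 : ℚ) else 0) -
          (if t = k then R.coroot (R.α k) (R.α j) else 0)) • R.α t := by
      rw [R.s_act']
      simp [sub_smul, Finset.sum_sub_distrib, Finset.sum_ite_eq', ite_smul]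
    obtain ⟨m, hm⟩ := R.coeff_int hroot _ hact k
    refine ⟨(if k = j then (1 : ℤ) else 0) - m, ?_⟩
    have := hm
    simp only [if_pos rfl] at this
    push_cast
    split_ifs at this ⊢ with h' <;> linarith
  have hlin : R.coroot (R.α k) (R.toLin w⁻¹ γ) =
      ∑ j, (d j : ℚ) * R.coroot (R.α k) (R.α j) := by
    rw [hd, R.coroot_sum]
    exact Finset.sum_congr rfl fun j _ => R.coroot_smul _ _ _
  refine ⟨∑ j, d j * (cartan j).choose, ?_⟩
  rw [h1, hlin]
  push_cast
  exact Finset.sum_congr rfl fun j _ =>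
    congrArg (fun z => (d j : ℚ) * z) (cartan j).choose_spec

lemma root_smul_simple {c : ℚ} {i : I} (h : R.isRoot (c • R.α i)) :
    c = 1 ∨ c = -1 := by
  have hc0 : c ≠ 0 := by
    rintro rfl
    exact R.root_ne_zero h (by simp)
  -- c is an integer
  have hexp : c • R.α i = ∑ t, (if t = i then c else 0) • R.α t := by
    simp [Finset.sum_ite_eq', ite_smul]
  obtain ⟨m, hm⟩ := R.coeff_int h _ hexp i
  simp at hm
  -- 2/c is an integer
  have h1 : R.B (c • R.α i) (R.α i) = c * R.B (R.α i) (R.α i) := by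
    rw [map_smul, LinearMap.smul_apply, smul_eq_mul]
  have h2 : R.B (c • R.α i) (c • R.α i) = c * (c * R.B (R.α i) (R.α i)) := by
    rw [map_smul, smul_eq_mul, h1]
  have hpair : R.coroot (c • R.α i) (R.α i) = 2 / c := by
    unfold coroot
    rw [h1, h2]
    rw [div_eq_div_iff (mul_ne_zero hc0 (mul_ne_zero hc0 (R.B_simple_ne i))) hc0]
    ring
  obtain ⟨m', hm'⟩ := R.pair_int h (R.root_simple i)
  rw [hpair] at hm'
  have hmm' : (m : ℚ) * m' = 2 := by
    rw [← hm, ← hm']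
    field_simp
  have hmm'' : m * m' = 2 := by exact_mod_cast hmm'
  -- exclude |c| = 2 using root_gen
  have hnot2 : m ≠ 2 ∧ m ≠ -2 := by
    have key : ∀ hm2 : m = 2 ∨ m = -2, False := by
      intro hm2
      obtain ⟨w, k, hwk⟩ := R.root_gen _ h
      have hδ : R.isRoot (R.toLin w⁻¹ (R.α i)) := R.root_inv _ _ (R.root_simple i)
      obtain ⟨e, he⟩ := R.root_int _ hδ
      have h3 : R.α k = c • R.toLin w⁻¹ (R.α i) := by
        have : R.toLin w⁻¹ (c • R.α i) = R.α k := by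
          rw [hwk, ← R.toLin_mul_apply, inv_mul_cancel, map_one]
          rfl
        rw [← this, map_smul]
      have hαk : R.α k = ∑ t, (c * (e t : ℚ)) • R.α t := by
        rw [h3, he, Finset.smul_sum]
        exact Finset.sum_congr rfl fun t _ => by rw [smul_smul]
      have hid : R.α k = ∑ t, (if t = k then (1:ℚ) else 0) • R.α t := by
        simp [Finset.sum_ite_eq', ite_smul]
      have hck := congrFun (R.coeff_unique (hαk.symm.trans hid)) k
      simp only [if_pos rfl] at hck
      rw [hm] at hck
      have hck' : m * e k = 1 := by exact_mod_cast hck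
      rcases hm2 with rfl | rfl <;> omega
    exact ⟨fun h2 => key (Or.inl h2), fun h2 => key (Or.inr h2)⟩
  have hm0 : m ≠ 0 := by
    rintro rfl
    rw [hm] at hc0
    exact hc0 (by norm_num)
  have hdvd : m ∣ 2 := ⟨m', hmm''.symm⟩
  have hb1 : m ≤ 2 := Int.le_of_dvd (by norm_num) hdvd
  have hb2 : -m ≤ 2 := Int.le_of_dvd (by norm_num) (neg_dvd.mpr hdvd)
  have : m = 1 ∨ m = -1 := by omega
  rcases this with h1 | h1
  · left; rw [hm, h1]; norm_num
  · right; rw [hm, h1]; norm_num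

lemma isPos_simple (i : I) : R.IsPos (R.α i) := by
  refine ⟨R.root_simple i, fun j => if j = i then 1 else 0, ?_⟩
  have : ∀ j : I, ((if j = i then (1:ℕ) else 0 : ℕ) : ℚ) • R.α j
      = (if j = i then (1:ℚ) else 0) • R.α j := by
    intro j; split_ifs <;> simp
  rw [Finset.sum_congr rfl fun j _ => this j]
  simp [Finset.sum_ite_eq', ite_smul]

lemma mem_posFinset {β : R.V} : β ∈ R.posFinset ↔ R.IsPos β := by
  unfold posFinset
  rw [Set.Finite.mem_toFinset]
  rfl

lemma neg_not_pos {β : R.V} (h : R.IsPos β) : ¬ R.IsPos (-β) := by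
  rintro ⟨h1, d, hd⟩
  obtain ⟨hroot, c, hc⟩ := h
  have h0 : ∑ j, ((c j : ℚ) + (d j : ℚ)) • R.α j = ∑ j, (0:ℚ) • R.α j := by
    simp only [add_smul, Finset.sum_add_distrib, ← hc, ← hd]
    simp
  have hco := congrFun (R.coeff_unique h0)
  have hz : ∀ j, c j = 0 := by
    intro j
    have hj : (c j : ℚ) + (d j : ℚ) = 0 := hco j
    have hnn : (0:ℚ) ≤ (c j : ℚ) := by positivity
    have hnn' : (0:ℚ) ≤ (d j : ℚ) := by positivity
    have : (c j : ℚ) = 0 := by linarith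
    exact_mod_cast this
  refine R.root_ne_zero hroot ?_
  rw [hc]
  simp [hz]

lemma simple_perm {γ : R.V} {i : I} (h : R.IsPos γ) (hne : γ ≠ R.α i) :
    R.IsPos (R.toLin (R.s i) γ) := by
  obtain ⟨hroot, c, hc⟩ := h
  have hroot' : R.isRoot (R.toLin (R.s i) γ) := R.root_inv _ _ hroot
  rcases R.pos_or_neg _ hroot' with hpos | hneg
  · exact ⟨hroot', hpos⟩
  exfalso
  obtain ⟨d, hd⟩ := hneg
  set m := R.coroot (R.α i) γ with hm
  have hsγ : R.toLin (R.s i) γ = γ - m • R.α i := R.s_act' i γ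
  -- coefficients of γ + (−s_i γ) are supported on i
  have hsum : ∑ j, ((c j : ℚ) + (d j : ℚ)) • R.α j = m • R.α i := by
    simp only [add_smul, Finset.sum_add_distrib]
    rw [← hc, ← hd, hsγ]
    abel
  have hite : ∑ j, (if j = i then m else 0) • R.α j = m • R.α i := by
    simp [Finset.sum_ite_eq', ite_smul]
  have hcoeff := congrFun (R.coeff_unique (hsum.trans hite.symm))
  have hcj : ∀ j, j ≠ i → c j = 0 := by
    intro j hj
    have := hcoeff j
    simp only [if_neg hj] at this
    have hnn : (0:ℚ) ≤ (c j : ℚ) := by positivity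
    have hnn' : (0:ℚ) ≤ (d j : ℚ) := by positivity
    have : (c j : ℚ) = 0 := by linarith
    exact_mod_cast this
  have hγ : γ = (c i : ℚ) • R.α i := by
    rw [hc, Finset.sum_eq_single i]
    · intro j _ hj; simp [hcj j hj]
    · intro hi; exact absurd (Finset.mem_univ i) hi
  have := R.root_smul_simple (hγ ▸ hroot)
  rcases this with h1 | h1
  · exact hne (by rw [hγ, h1, one_smul])
  · have : (0:ℚ) ≤ (c i : ℚ) := by positivity
    rw [h1] at this
    norm_num at this

lemma s_alpha_neg (i : I) : R.toLin (R.s i) (R.α i) = -(R.α i) := by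
  rw [R.s_act', R.coroot_self (R.root_simple i)]
  module

lemma s_rho (i : I) : R.toLin (R.s i) R.ρ = R.ρ - R.α i := by
  classical
  have hmem : R.α i ∈ R.posFinset := R.mem_posFinset.mpr (R.isPos_simple i)
  have hbij : ∑ β ∈ R.posFinset.erase (R.α i), R.toLin (R.s i) β
      = ∑ β ∈ R.posFinset.erase (R.α i), β := by
    refine Finset.sum_nbij' (fun β => R.toLin (R.s i) β) (fun β => R.toLin (R.s i) β)
      ?_ ?_ ?_ ?_ ?_
    · intro β hβ
      rw [Finset.mem_erase] at hβ ⊢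
      obtain ⟨hβne, hβpos⟩ := hβ
      rw [R.mem_posFinset] at hβpos ⊢
      refine ⟨?_, R.simple_perm hβpos hβne⟩
      intro he
      have : β = R.toLin (R.s i) (R.α i) := by
        rw [← he, R.toLin_s_s]
      rw [R.s_alpha_neg] at this
      subst this
      exact R.neg_not_pos (R.isPos_simple i) (by simpa using hβpos)
    · intro β hβ
      rw [Finset.mem_erase] at hβ ⊢
      obtain ⟨hβne, hβpos⟩ := hβ
      rw [R.mem_posFinset] at hβpos ⊢
      refine ⟨?_, R.simple_perm hβpos hβne⟩
      intro he
      have : β = R.toLin (R.s i) (R.α i) := by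
        rw [← he, R.toLin_s_s]
      rw [R.s_alpha_neg] at this
      subst this
      exact R.neg_not_pos (R.isPos_simple i) (by simpa using hβpos)
    · intro β _; exact R.toLin_s_s i β
    · intro β _; exact R.toLin_s_s i β
    · intro β _; rfl
  have hsum : R.toLin (R.s i) (∑ β ∈ R.posFinset, β)
      = (∑ β ∈ R.posFinset, β) - (2:ℚ) • R.α i := by
    rw [← Finset.add_sum_erase _ _ hmem, map_add, map_sum, hbij, R.s_alpha_neg]
    module
  unfold ρ
  rw [map_smul, hsum]
  module

lemma coroot_simple_rho (i : I) : R.coroot (R.α i) R.ρ = 1 := by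
  have h1 := R.s_act' i R.ρ
  rw [R.s_rho] at h1
  have h2 : (R.coroot (R.α i) R.ρ - 1) • R.α i = 0 := by
    linear_combination (norm := module) h1
  rcases smul_eq_zero.mp h2 with h3 | h3
  · linarith [h3]
  · exact absurd h3 (R.root_ne_zero (R.root_simple i))

lemma coroot_ge_one {β γ : R.V} (hβ : R.isRoot β) (hγ : R.isRoot γ)
    (hB : 0 < R.B β γ) : 1 ≤ R.coroot β γ := by
  obtain ⟨m, hm⟩ := R.pair_int hβ hγ
  have hpos : 0 < R.coroot β γ := div_pos (by linarith) (R.B_pos β hβ)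
  rw [hm] at hpos ⊢
  have h1 : 0 < m := by exact_mod_cast hpos
  exact_mod_cast h1

lemma len_refl_le_aux : ∀ n : ℕ, ∀ β : R.V, ∀ c : I → ℕ, R.isRoot β →
    β = ∑ j, (c j : ℚ) • R.α j → (∑ j, c j) = n →
    (R.len (R.refl β) : ℚ) ≤ 2 * R.coroot β R.ρ - 1 := by
  intro n
  induction n using Nat.strong_induction_on with
  | _ n ih =>
  intro β c hβ hc hn
  have hBβ : (0:ℚ) < R.B β β := R.B_pos β hβ
  have hBkey : ∀ x : R.V, R.B β x = ∑ j, (c j : ℚ) * R.B (R.α j) x := by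
    intro x
    conv_lhs => rw [hc]
    rw [map_sum, LinearMap.sum_apply]
    exact Finset.sum_congr rfl fun j _ => by
      rw [map_smul, LinearMap.smul_apply, smul_eq_mul]
  have hBsum := hBkey β
  obtain ⟨i, hi⟩ : ∃ i, 0 < (c i : ℚ) * R.B (R.α i) β := by
    by_contra hcon
    push_neg at hcon
    have : R.B β β ≤ 0 := hBsum ▸ Finset.sum_nonpos (fun j _ => hcon j)
    linarith
  have hBi : 0 < R.B (R.α i) β := by
    rcases lt_or_ge 0 (R.B (R.α i) β) with h | h
    · exact h
    · nlinarith [show (0:ℚ) ≤ (c i : ℚ) by positivity]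
  by_cases hβi : β = R.α i
  · subst hβi
    rw [R.refl_simple, R.coroot_simple_rho]
    have := R.len_s_le i
    have h1 : (R.len (R.s i) : ℚ) ≤ 1 := by exact_mod_cast this
    linarith
  · set m := R.coroot (R.α i) β with hmdef
    have hm1 : 1 ≤ m := R.coroot_ge_one (R.root_simple i) hβ hBi
    have hm1' : 1 ≤ R.coroot β (R.α i) :=
      R.coroot_ge_one hβ (R.root_simple i) (by rw [R.B_symm]; exact hBi)
    set γ := R.toLin (R.s i) β with hγdef
    have hγpos : R.IsPos γ := R.simple_perm ⟨hβ, c, hc⟩ hβi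
    obtain ⟨hγroot, c', hc'⟩ := hγpos
    have hγeq : γ = β - m • R.α i := R.s_act' i β
    have hrel : ∀ j, (c' j : ℚ) = (c j : ℚ) - (if j = i then m else 0) := by
      have hs : ∑ j, (c' j : ℚ) • R.α j
          = ∑ j, ((c j : ℚ) - (if j = i then m else 0)) • R.α j := by
        simp only [sub_smul, Finset.sum_sub_distrib, ite_smul, zero_smul,
          Finset.sum_ite_eq', Finset.mem_univ, if_pos]
        rw [← hc', ← hc, hγeq]
      exact fun j => congrFun (R.coeff_unique hs) j
    have hsum' : (∑ j, (c' j : ℚ)) = (n : ℚ) - m := by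
      rw [Finset.sum_congr rfl fun j _ => hrel j]
      rw [Finset.sum_sub_distrib, Finset.sum_ite_eq', if_pos (Finset.mem_univ i)]
      congr 1
      rw [← hn]
      push_cast
      rfl
    have hlt : (∑ j, c' j) < n := by
      have h1 : ((∑ j, c' j : ℕ) : ℚ) = (n : ℚ) - m := by
        push_cast
        rw [← hsum']
      have h2 : ((∑ j, c' j : ℕ) : ℚ) < (n : ℚ) := by linarith
      exact_mod_cast h2
    have hIH := ih _ hlt γ c' hγroot hc' rfl
    have hβγ : β = R.toLin (R.s i) γ := by rw [hγdef, R.toLin_s_s]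
    have hreflβ : R.refl β = R.s i * R.refl γ * R.s i := by
      conv_lhs => rw [hβγ]
      rw [R.refl_conj hγroot, R.s_inv]
    have hlen : R.len (R.refl β) ≤ R.len (R.refl γ) + 2 := by
      rw [hreflβ]
      calc R.len (R.s i * R.refl γ * R.s i)
          ≤ R.len (R.s i * R.refl γ) + R.len (R.s i) := R.len_mul_le _ _
        _ ≤ R.len (R.s i) + R.len (R.refl γ) + R.len (R.s i) := by
            have := R.len_mul_le (R.s i) (R.refl γ)
            omega
        _ ≤ R.len (R.refl γ) + 2 := by
            have := R.len_s_le i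
            omega
    have hcor : R.coroot γ R.ρ = R.coroot β R.ρ - R.coroot β (R.α i) := by
      have h1 : R.coroot γ R.ρ = R.coroot β (R.toLin (R.s i) R.ρ) := by
        conv_lhs => rw [show R.ρ = R.toLin (R.s i) (R.toLin (R.s i) R.ρ) from
          (R.toLin_s_s i R.ρ).symm]
        rw [hγdef, R.coroot_inv]
      rw [h1, R.s_rho, R.coroot_sub]
    have hcast : (R.len (R.refl β) : ℚ) ≤ (R.len (R.refl γ) : ℚ) + 2 := by
      exact_mod_cast hlen
    rw [hcor] at hIH
    linarith

lemma len_refl_le {β : R.V} (h : R.IsPos β) :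
    (R.len (R.refl β) : ℚ) ≤ 2 * R.coroot β R.ρ - 1 := by
  obtain ⟨hroot, c, hc⟩ := h
  exact R.len_refl_le_aux _ β c hroot hc rfl

lemma len_le_mul_add (x y : R.W) : R.len x ≤ R.len (x * y) + R.len y := by
  have h1 := R.len_mul_le (x * y) y⁻¹
  rw [mul_assoc, mul_inv_cancel, mul_one, R.len_inv] at h1
  exact h1

end RootSystemData

/-- If `w → w s_β` is a quantum edge then `β` is a quantum root, and for any
reduced expression of `s_β` the lengths `ℓ(w s_{j_1} ⋯ s_{j_t})` decrease by one
at each step. -/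
theorem stmt4 {I : Type} [Fintype I] [DecidableEq I] (R : RootSystemData I)
    (w : R.W) (β : R.V) (hq : R.QuantumEdge w β) :
    R.IsQuantumRoot β ∧
    ∀ l : List I, (l.map R.s).prod = R.refl β → l.length = R.len (R.refl β) →
      ∀ t ≤ l.length,
        (R.len (w * ((l.take t).map R.s).prod) : ℤ) = (R.len w : ℤ) - t := by
  obtain ⟨hpos, hlen⟩ := hq
  set q := R.coroot β R.ρ with hq'
  have hub : (R.len (R.refl β) : ℚ) ≤ 2 * q - 1 := R.len_refl_le hpos
  have hlb : (R.len w : ℚ) ≤ (R.len (w * R.refl β) : ℚ) + (R.len (R.refl β) : ℚ) := by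
    exact_mod_cast R.len_le_mul_add w (R.refl β)
  have hL : (R.len (R.refl β) : ℚ) = 2 * q - 1 := le_antisymm hub (by linarith)
  refine ⟨⟨hpos, hL⟩, ?_⟩
  intro l hl hllen t ht
  set u := ((l.take t).map R.s).prod with hu
  set v := ((l.drop t).map R.s).prod with hv
  have huv : u * v = R.refl β := by
    rw [hu, hv, ← List.prod_append, ← List.map_append, List.take_append_drop, hl]
  have hlenu : R.len u ≤ t := by
    have := R.len_word_le (l.take t)
    rwa [List.length_take, min_eq_left ht] at this
  have hlenv : R.len v ≤ l.length - t := by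
    have := R.len_word_le (l.drop t)
    rwa [List.length_drop] at this
  have hlow : (R.len w : ℚ) - t ≤ (R.len (w * u) : ℚ) := by
    have h1 := R.len_le_mul_add w u
    have h2 : (R.len w : ℚ) ≤ (R.len (w * u) : ℚ) + (R.len u : ℚ) := by exact_mod_cast h1
    have h3 : (R.len u : ℚ) ≤ t := by exact_mod_cast hlenu
    linarith
  have hhigh : (R.len (w * u) : ℚ) ≤ (R.len w : ℚ) - t := by
    have hwu : w * u = (w * R.refl β) * v⁻¹ := by
      rw [← huv]
      group
    have h1 : R.len (w * u) ≤ R.len (w * R.refl β) + R.len v := by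
      rw [hwu, ← R.len_inv v]
      exact R.len_mul_le _ _
    have h2 : (R.len (w * u) : ℚ) ≤ (R.len (w * R.refl β) : ℚ) + (R.len v : ℚ) := by
      exact_mod_cast h1
    have h3 : (R.len v : ℚ) ≤ (l.length : ℚ) - t := by
      have h4 : (R.len v : ℚ) ≤ ((l.length - t : ℕ) : ℚ) := by exact_mod_cast hlenv
      have h5 : ((l.length - t : ℕ) : ℚ) = (l.length : ℚ) - t := by
        exact_mod_cast Nat.cast_sub (R := ℚ) ht
      linarith [h4, h5.le]
    have h6 : (l.length : ℚ) = 2 * q - 1 := by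
      rw [hllen]; exact hL
    linarith [hlen]
  have hQ : (R.len (w * u) : ℚ) = (R.len w : ℚ) - t := le_antisymm hhigh hlow
  exact_mod_cast hQ
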